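/- arXiv:2010.13324 — 2 statements merged into one kernel-verified Lean document; each statement's English description precedes it below -/
import Mathlib

section
/- For all integers n ≥ 2 and 0 ≤ k ≤ n−1, one has 1GN(n,k+1) ≥ ((n−k)(n+k−1)/(k+1))·1GN(n,k); consequently, for every n ≥ 2, the sequence k ↦ 1GN(n,k) is increasing in k for 0 ≤ k ≤ n. -/
/-!
Induction on the column `t` of `N`, for all rows `n > t` at once. In the
recurrence for `N n (k + 2)` the correction sum is nonpositive by monotonicity in `n`, and it is
at least `-2 (k + 1) N n k`: its subtracted terms at least halve from `d` to `d + 1` (by the two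
growth bounds in lower columns) and the first one is `(k + 1) N n k`. Hence
`(n + k - 1) N n (k + 1) ≤ N n (k + 2) ≤ (n + k) N n (k + 1)`, which yields the bounds for column
`k + 2`. The ratio bound is the column growth at row `n + 1` combined with
`(k + 1) C(n, k + 1) = (n - k) C(n, k)`, and for `n ≥ 2` the ratio is at least `1`.
-/

/-- Odd double factorial: `ddf m` equals `m!!` for odd `m`, and `ddf 0 = 1`
(so that `ddf (2*n - 5)` with truncated subtraction encodes `(2n-5)!!`
with the convention `(-1)!! = 1`). -/
def ddf : ℕ → ℚ
  | 0 => 1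
  | 1 => 1
  | n + 2 => (n + 2) * ddf n

/-- `N n k` is the number of one-component galled networks with `n - 1` leaves whose `k`
reticulation-node children are labeled `1, …, k`, defined by the initial values
`N(n,0) = (2n-5)!!`, `N(n,1) = (n-2)(2n-5)!!` and the Gunawan--Rathin--Zhang recurrence. -/
def N : ℕ → ℕ → ℚ
  | n, 0 => ddf (2 * n - 5)
  | n, 1 => ((n : ℚ) - 2) * ddf (2 * n - 5)
  | n, k + 2 =>
      ((n : ℚ) + (k + 2) - 3) * N n (k + 1) + ((k : ℚ) + 1) * N n k
        + (1 / 2) * ∑ d ∈ Finset.Icc 1 (k + 1),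
            (((k + 1).choose d : ℚ)) * ddf (2 * d - 1) *
              (N (n - d) (k + 1 - d) - N (n - d + 1) (k + 1 - d))
  termination_by n k => k
  decreasing_by all_goals omega

/-- `oneGNk n k` is the number of one-component galled networks with `n` leaves and `k`
reticulation nodes: `1GN(n,k) = C(n,k) * N(n+1,k)`. -/
def oneGNk (n k : ℕ) : ℚ := (n.choose k : ℚ) * N (n + 1) k

open Finset

lemma ddf_nonneg (m : ℕ) : 0 ≤ ddf m := by
  induction m using ddf.induct with
  | case1 | case2 => simp [ddf]
  | case3 m ih => rw [ddf]; positivity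

lemma ddf_two_mul_add_one (d : ℕ) : ddf (2 * d + 1) = (2 * d + 1) * ddf (2 * d - 1) := by
  cases d with
  | zero => simp [ddf]
  | succ d =>
    rw [show 2 * (d + 1) + 1 = 2 * d + 1 + 2 by omega, ddf, show 2 * (d + 1) - 1 = 2 * d + 1 by omega]
    push_cast
    ring

lemma N_zero (n : ℕ) : N n 0 = ddf (2 * n - 5) := by
  rw [N]

lemma N_one (n : ℕ) : N n 1 = ((n : ℚ) - 2) * N n 0 := by
  rw [N, N]

lemma N_succ_zero {n : ℕ} (hn : 3 ≤ n) : N (n + 1) 0 = (2 * (n : ℚ) - 3) * N n 0 := by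
  rw [N_zero, N_zero, show 2 * (n + 1) - 5 = 2 * n - 5 + 2 by omega, ddf]
  push_cast [show 5 ≤ 2 * n by omega]
  ring

def correctionSum (n k : ℕ) : ℚ :=
  ∑ d ∈ Icc 1 (k + 1), ((k + 1).choose d : ℚ) * ddf (2 * d - 1) *
    (N (n - d) (k + 1 - d) - N (n - d + 1) (k + 1 - d))

lemma N_add_two (n k : ℕ) :
    N n (k + 2) = ((n : ℚ) + k - 1) * N n (k + 1) + ((k : ℚ) + 1) * N n k
      + correctionSum n k / 2 := by
  rw [N, correctionSum]
  ring

lemma sum_Icc_add_le_two_mul {α : Type*} [Semiring α] [PartialOrder α] [IsOrderedAddMonoid α]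
    {f : ℕ → α} {a b : ℕ} (hab : a ≤ b) (hf : ∀ i ∈ Ico a b, 2 * f (i + 1) ≤ f i) :
    ∑ i ∈ Icc a b, f i + f b ≤ 2 * f a := by
  induction b, hab using Nat.le_induction with
  | base => simp [two_mul]
  | succ b hab ih =>
    have hb := hf b (by simp [hab])
    rw [sum_Icc_succ_top (by omega), add_assoc, ← two_mul]
    calc _ ≤ ∑ i ∈ Icc a b, f i + f b := by gcongr
      _ ≤ 2 * f a := ih fun i hi => hf i (by simp at hi ⊢; omega)

structure ColumnBounds (t : ℕ) : Prop where
  nonneg : ∀ n, t < n → 0 ≤ N n t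
  le_succ_row : ∀ n, t < n → N n t ≤ N (n + 1) t
  row_growth : ∀ n, t < n → (2 * (n : ℚ) - 4) * N n t ≤ N (n + 1) t
  col_growth : 0 < t → ∀ n, t < n → ((n : ℚ) + t - 3) * N n (t - 1) ≤ N n t

lemma N_zero_nonneg (n : ℕ) : 0 ≤ N n 0 := by
  rw [N_zero]
  exact ddf_nonneg _

lemma columnBounds_zero : ColumnBounds 0 where
  nonneg n _ := N_zero_nonneg n
  le_succ_row n _ := by
    rcases le_or_gt 3 n with hn | hn
    · have : (3 : ℚ) ≤ n := by exact_mod_cast hn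
      rw [N_succ_zero hn]
      exact le_mul_of_one_le_left (N_zero_nonneg n) (by linarith)
    · -- `2 * n - 5` truncates to `0` here: `N 1 0 = N 2 0 = N 3 0 = 1`
      interval_cases n <;> simp [N_zero, ddf]
  row_growth n _ := by
    rcases le_or_gt 3 n with hn | hn
    · rw [N_succ_zero hn]
      exact mul_le_mul_of_nonneg_right (by linarith) (N_zero_nonneg n)
    · have : (n : ℚ) ≤ 2 := by exact_mod_cast (by omega : n ≤ 2)
      exact (mul_nonpos_of_nonpos_of_nonneg (by linarith) (N_zero_nonneg n)).trans
        (N_zero_nonneg (n + 1))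
  col_growth h := (lt_irrefl 0 h).elim

lemma columnBounds_one : ColumnBounds 1 where
  nonneg n hn := by
    have : (2 : ℚ) ≤ n := by exact_mod_cast hn
    rw [N_one]
    exact mul_nonneg (by linarith) (N_zero_nonneg n)
  le_succ_row n hn := by
    have : (2 : ℚ) ≤ n := by exact_mod_cast hn
    have := N_zero_nonneg (n + 1)
    rw [N_one, N_one]
    push_cast
    calc ((n : ℚ) - 2) * N n 0 ≤ (n - 2) * N (n + 1) 0 := by
          gcongr
          exact columnBounds_zero.le_succ_row n (by omega)
      _ ≤ (n + 1 - 2) * N (n + 1) 0 := by gcongr; linarith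
  row_growth n hn := by
    have : (2 : ℚ) ≤ n := by exact_mod_cast hn
    have := N_zero_nonneg (n + 1)
    rw [N_one, N_one]
    push_cast
    calc (2 * (n : ℚ) - 4) * ((n - 2) * N n 0) = (n - 2) * ((2 * n - 4) * N n 0) := by ring
      _ ≤ (n - 2) * N (n + 1) 0 := by
          gcongr
          exact columnBounds_zero.row_growth n (by omega)
      _ ≤ (n + 1 - 2) * N (n + 1) 0 := by gcongr; linarith
  col_growth _ n _ := le_of_eq (by rw [N_one, Nat.sub_self]; push_cast; ring)

def correctionTerm (n k d : ℕ) : ℚ :=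
  ((k + 1).choose d : ℚ) * ddf (2 * d - 1) * N (n - d + 1) (k + 1 - d)

lemma correctionTerm_nonneg {k : ℕ} (H : ∀ s < k + 2, ColumnBounds s) {n d : ℕ}
    (hn : k + 3 ≤ n) (hd : d ≤ k + 1) : 0 ≤ correctionTerm n k d := by
  have := ddf_nonneg (2 * d - 1)
  have := (H (k + 1 - d) (by omega)).nonneg (n - d + 1) (by omega)
  unfold correctionTerm
  positivity

lemma ColumnBounds.diagonal_growth {j : ℕ} (hj : ColumnBounds j) (hj' : ColumnBounds (j + 1))
    {m : ℕ} (hm : j < m) : ((m : ℚ) + j - 1) * ((2 * m - 4) * N m j) ≤ N (m + 1) (j + 1) := by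
  have hcol := hj'.col_growth j.succ_pos (m + 1) (by omega)
  simp only [add_tsub_cancel_right] at hcol
  push_cast at hcol
  have : (1 : ℚ) ≤ m := by exact_mod_cast (by omega : 1 ≤ m)
  calc _ ≤ ((m : ℚ) + j - 1) * N (m + 1) j := by
        gcongr
        · linarith
        · exact hj.row_growth m hm
    _ ≤ _ := by linarith

lemma two_mul_correctionTerm_succ_le {k : ℕ} (H : ∀ s < k + 2, ColumnBounds s) {n d : ℕ}
    (hn : k + 3 ≤ n) (hdk : d ≤ k) :
    2 * correctionTerm n k (d + 1) ≤ correctionTerm n k d := by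
  obtain ⟨j, rfl⟩ : ∃ j, k = d + j := ⟨k - d, by omega⟩
  obtain ⟨m, rfl⟩ : ∃ m, n = d + m := ⟨n - d, by omega⟩
  have hm : (j : ℚ) + 3 ≤ m := by exact_mod_cast (by omega : j + 3 ≤ m)
  have hchoose : ((d + j + 1).choose (d + 1) : ℚ) = (d + j + 1).choose d * (j + 1) / (d + 1) := by
    rw [eq_div_iff (by positivity)]
    exact_mod_cast (Nat.choose_succ_right_eq (d + j + 1) d).trans (by congr 1; omega)
  set c := ((d + j + 1).choose d : ℚ) * ddf (2 * d - 1)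
  have hc : 0 ≤ c := mul_nonneg (by positivity) (ddf_nonneg _)
  have hNm := (H j (by omega)).nonneg m (by omega)
  have hd' : (2 * (2 * d + 1) : ℚ) / (d + 1) ≤ 4 := by
    rw [div_le_iff₀ (by positivity)]
    linarith
  unfold correctionTerm
  simp only [show d + m - (d + 1) + 1 = m by omega, show d + j + 1 - (d + 1) = j by omega,
    show d + m - d + 1 = m + 1 by omega, show d + j + 1 - d = j + 1 by omega,
    show 2 * (d + 1) - 1 = 2 * d + 1 by omega, ddf_two_mul_add_one, hchoose]
  calc 2 * ((d + j + 1).choose d * ((j : ℚ) + 1) / (d + 1) * ((2 * d + 1) * ddf (2 * d - 1))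
        * N m j) = 2 * (2 * d + 1) / (d + 1) * (j + 1) * (c * N m j) := by ring
    _ ≤ 4 * (j + 1) * (c * N m j) := by gcongr
    _ ≤ ((m : ℚ) + j - 1) * (2 * m - 4) * (c * N m j) := by
        refine mul_le_mul_of_nonneg_right ?_ (mul_nonneg hc hNm)
        nlinarith
    _ = c * (((m : ℚ) + j - 1) * ((2 * m - 4) * N m j)) := by ring
    _ ≤ c * N (m + 1) (j + 1) := by
        gcongr
        exact (H j (by omega)).diagonal_growth (H (j + 1) (by omega)) (by omega)

lemma correctionTerm_one {n : ℕ} (hn : 1 ≤ n) (k : ℕ) : correctionTerm n k 1 = (k + 1) * N n k := by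
  simp [correctionTerm, ddf, Nat.sub_add_cancel hn]

lemma sum_correctionTerm_le {k : ℕ} (H : ∀ s < k + 2, ColumnBounds s) {n : ℕ} (hn : k + 3 ≤ n) :
    ∑ d ∈ Icc 1 (k + 1), correctionTerm n k d ≤ 2 * ((k + 1) * N n k) := by
  have hsum := sum_Icc_add_le_two_mul (f := correctionTerm n k) (by omega : 1 ≤ k + 1)
    fun d hd => two_mul_correctionTerm_succ_le H hn (Nat.le_of_lt_succ (mem_Ico.1 hd).2)
  rw [correctionTerm_one (by omega)] at hsum
  linarith [correctionTerm_nonneg H hn le_rfl]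

lemma neg_le_correctionSum {k : ℕ} (H : ∀ s < k + 2, ColumnBounds s) {n : ℕ} (hn : k + 3 ≤ n) :
    -(2 * ((k + 1) * N n k)) ≤ correctionSum n k := by
  refine (neg_le_neg (sum_correctionTerm_le H hn)).trans ?_
  rw [← sum_neg_distrib]
  refine sum_le_sum fun d hd => ?_
  rw [mem_Icc] at hd
  have := mul_nonneg (mul_nonneg (Nat.cast_nonneg ((k + 1).choose d)) (ddf_nonneg (2 * d - 1)))
    ((H (k + 1 - d) (by omega)).nonneg (n - d) (by omega))
  unfold correctionTerm
  linarith

lemma correctionSum_nonpos {k : ℕ} (H : ∀ s < k + 2, ColumnBounds s) {n : ℕ} (hn : k + 3 ≤ n) :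
    correctionSum n k ≤ 0 := by
  refine sum_nonpos fun d hd => ?_
  rw [mem_Icc] at hd
  refine mul_nonpos_of_nonneg_of_nonpos (mul_nonneg (by positivity) (ddf_nonneg _)) ?_
  exact sub_nonpos.2 ((H (k + 1 - d) (by omega)).le_succ_row (n - d) (by omega))

lemma col_growth_add_two {k : ℕ} (H : ∀ s < k + 2, ColumnBounds s) {n : ℕ} (hn : k + 3 ≤ n) :
    ((n : ℚ) + k - 1) * N n (k + 1) ≤ N n (k + 2) := by
  rw [N_add_two]
  linarith [neg_le_correctionSum H hn]

lemma N_add_two_le {k : ℕ} (H : ∀ s < k + 2, ColumnBounds s) {n : ℕ} (hn : k + 3 ≤ n) :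
    N n (k + 2) ≤ ((n : ℚ) + k) * N n (k + 1) := by
  have hn' : (k : ℚ) + 3 ≤ n := by exact_mod_cast hn
  have hcol := (H (k + 1) (by omega)).col_growth (by omega) n (by omega)
  simp only [add_tsub_cancel_right, Nat.cast_add, Nat.cast_one] at hcol
  have hk : ((k : ℚ) + 1) * N n k ≤ ((n : ℚ) + (k + 1) - 3) * N n k :=
    mul_le_mul_of_nonneg_right (by linarith) ((H k (by omega)).nonneg n (by omega))
  rw [N_add_two]
  linarith [correctionSum_nonpos H hn]

lemma row_growth_add_two {k : ℕ} (H : ∀ s < k + 2, ColumnBounds s) {n : ℕ} (hn : k + 3 ≤ n) :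
    (2 * (n : ℚ) - 4) * N n (k + 2) ≤ N (n + 1) (k + 2) := by
  have : (k : ℚ) + 3 ≤ n := by exact_mod_cast hn
  have hcol := col_growth_add_two H (n := n + 1) (by omega)
  push_cast at hcol
  calc (2 * (n : ℚ) - 4) * N n (k + 2) ≤ (2 * n - 4) * ((n + k) * N n (k + 1)) := by
        gcongr
        · linarith
        · exact N_add_two_le H hn
    _ = (n + k) * ((2 * n - 4) * N n (k + 1)) := by ring
    _ ≤ (n + k) * N (n + 1) (k + 1) := by
        gcongr
        exact (H (k + 1) (by omega)).row_growth n (by omega)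
    _ ≤ N (n + 1) (k + 2) := by linarith

lemma columnBounds_add_two {k : ℕ} (H : ∀ s < k + 2, ColumnBounds s) : ColumnBounds (k + 2) := by
  have hnonneg : ∀ n, k + 2 < n → 0 ≤ N n (k + 2) := fun n hn => by
    have : (k : ℚ) + 3 ≤ n := by exact_mod_cast hn
    exact (mul_nonneg (by linarith) ((H (k + 1) (by omega)).nonneg n (by omega))).trans
      (col_growth_add_two H hn)
  refine ⟨hnonneg, fun n hn => ?_, fun n hn => row_growth_add_two H hn, fun _ n hn => ?_⟩
  · have : (k : ℚ) + 3 ≤ n := by exact_mod_cast hn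
    exact (le_mul_of_one_le_left (hnonneg n hn) (by linarith)).trans (row_growth_add_two H hn)
  · have := col_growth_add_two H hn
    rw [show k + 2 - 1 = k + 1 from rfl]
    push_cast
    linarith

lemma columnBounds (t : ℕ) : ColumnBounds t := by
  induction t using Nat.strong_induction_on with
  | _ t ih =>
    match t, ih with
    | 0, _ => exact columnBounds_zero
    | 1, _ => exact columnBounds_one
    | k + 2, ih => exact columnBounds_add_two ih

lemma oneGNk_nonneg {n k : ℕ} (hk : k ≤ n) : 0 ≤ oneGNk n k :=
  mul_nonneg (Nat.cast_nonneg _) ((columnBounds k).nonneg (n + 1) (by omega))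

lemma ratio_mul_oneGNk_le {n k : ℕ} (hk : k < n) :
    ((n : ℚ) - k) * ((n : ℚ) + k - 1) / ((k : ℚ) + 1) * oneGNk n k ≤ oneGNk n (k + 1) := by
  have hcol := (columnBounds (k + 1)).col_growth (by omega) (n + 1) (by omega)
  simp only [add_tsub_cancel_right] at hcol
  push_cast at hcol
  have hchoose : (n.choose (k + 1) : ℚ) = n.choose k * ((n : ℚ) - k) / (k + 1) := by
    rw [eq_div_iff (by positivity), ← Nat.cast_sub hk.le]
    exact_mod_cast Nat.choose_succ_right_eq n k
  unfold oneGNk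
  calc ((n : ℚ) - k) * ((n : ℚ) + k - 1) / ((k : ℚ) + 1) * (n.choose k * N (n + 1) k)
      = n.choose (k + 1) * (((n : ℚ) + k - 1) * N (n + 1) k) := by
        rw [hchoose]
        ring
    _ ≤ n.choose (k + 1) * N (n + 1) (k + 1) := by
        gcongr
        linarith

lemma oneGNk_le_succ {n k : ℕ} (hn : 2 ≤ n) (hk : k < n) : oneGNk n k ≤ oneGNk n (k + 1) := by
  have hratio : 1 ≤ ((n : ℚ) - k) * ((n : ℚ) + k - 1) / ((k : ℚ) + 1) := by
    have : (k : ℚ) + 1 ≤ n := by exact_mod_cast hk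
    have : (2 : ℚ) ≤ n := by exact_mod_cast hn
    rw [le_div_iff₀ (by positivity)]
    nlinarith
  calc oneGNk n k ≤ _ * oneGNk n k := le_mul_of_one_le_left (oneGNk_nonneg hk.le) hratio
    _ ≤ oneGNk n (k + 1) := ratio_mul_oneGNk_le hk

/-- For `n ≥ 2` and `0 ≤ k ≤ n - 1`,
`1GN(n,k+1) ≥ ((n-k)(n+k-1)/(k+1)) · 1GN(n,k)`; consequently `k ↦ 1GN(n,k)` is
increasing for `0 ≤ k ≤ n`. -/
theorem oneGNk_ratio_and_monotone (n : ℕ) (hn : 2 ≤ n) :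
    (∀ k : ℕ, k ≤ n - 1 →
      oneGNk n (k + 1) ≥ ((n : ℚ) - k) * ((n : ℚ) + k - 1) / ((k : ℚ) + 1) * oneGNk n k) ∧
    (∀ k l : ℕ, k ≤ l → l ≤ n → oneGNk n k ≤ oneGNk n l) := by
  refine ⟨fun k hk => ratio_mul_oneGNk_le (by omega), fun k l hkl hl => ?_⟩
  have hmono : MonotoneOn (oneGNk n) (Set.Iic n) :=
    monotoneOn_of_le_succ Set.ordConnected_Iic fun k _ _ hk =>
      oneGNk_le_succ hn (Order.succ_le_iff.1 hk)
  exact hmono (hkl.trans hl) hl hkl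
end

section
/- There exist a constant c > 0 and an integer n₀ such that for all n ≥ n₀ and all integers j with 0 ≤ j ≤ ⌊n/2⌋, ∑_{ℓ=0}^{n−2j} C(n−2j,ℓ)·N(n−j+1, ℓ+j) ≤ c^n·n^{2n−2j}. -/
lemma ddf_pos : ∀ m, 0 < ddf m
  | 0 | 1 => by norm_num [ddf]
  | m + 2 => by
    rw [ddf]
    have := ddf_pos m
    positivity

lemma ddf_le_pow : ∀ m, ddf m ≤ ((m + 1 : ℕ) : ℚ) ^ ((m + 1) / 2)
  | 0 | 1 => by norm_num [ddf]
  | m + 2 => by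
    rw [ddf, show (m + 2 + 1) / 2 = (m + 1) / 2 + 1 by omega, pow_succ']
    push_cast
    calc ((m : ℚ) + 2) * ddf m ≤ ((m : ℚ) + 2 + 1) * ((m + 1 : ℕ) : ℚ) ^ ((m + 1) / 2) :=
          mul_le_mul (by linarith) (ddf_le_pow m) (ddf_pos m).le (by positivity)
      _ ≤ ((m : ℚ) + 2 + 1) * ((m : ℚ) + 2 + 1) ^ ((m + 1) / 2) := by
          gcongr
          push_cast
          linarith

lemma ddf_two_mul_sub_five_le {n : ℕ} (hn : 1 ≤ n) : ddf (2 * n - 5) ≤ (4 * (n : ℚ)) ^ n :=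
  (ddf_le_pow _).trans <| by exact_mod_cast pow_le_pow (by omega) (by omega) (by omega)

lemma ddf_two_mul_sub_one_le {d M : ℕ} (hdM : d ≤ M) :
    ddf (2 * d - 1) ≤ (2 * (M : ℚ)) ^ d := by
  rcases d with _ | d
  · simp [ddf]
  refine (ddf_le_pow _).trans ?_
  rw [show (2 * (d + 1) - 1 + 1) / 2 = d + 1 by omega]
  exact_mod_cast Nat.pow_le_pow_left (by omega) (d + 1)

lemma sum_Icc_one_half_pow_le_one (m : ℕ) :
    ∑ d ∈ Finset.Icc 1 m, (1 / 2 : ℚ) ^ d ≤ 1 := by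
  rw [← Finset.Ico_add_one_right_eq_Icc]
  exact (geom_sum_Ico_le_of_lt_one (by norm_num) (by norm_num)).trans_eq (by norm_num)

lemma abs_choose_mul_ddf_mul_sub_le {M k d : ℕ} (hd : 1 ≤ d) (hdM : 2 * d ≤ M) (hkM : k ≤ M)
    {a b : ℚ} (ha : |a| ≤ (4 * (M : ℚ)) ^ (M - 2 * d))
    (hb : |b| ≤ (4 * (M : ℚ)) ^ (M - 2 * d)) :
    |(k.choose d : ℚ) * ddf (2 * d - 1) * (a - b)| ≤ (1 / 2) ^ d * (4 * (M : ℚ)) ^ M := by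
  set E := (4 * (M : ℚ)) ^ (M - 2 * d)
  have hchoose : (k.choose d : ℚ) ≤ (M : ℚ) ^ d := by
    exact_mod_cast (Nat.choose_le_pow k d).trans (Nat.pow_le_pow_left hkM d)
  have hsub : |a - b| ≤ 2 * E := (abs_sub a b).trans (by linarith)
  have hsplit : (4 * (M : ℚ)) ^ M = 16 ^ d * ((M : ℚ) ^ d) ^ 2 * E := by
    rw [← pow_sub_mul_pow _ hdM, pow_mul, mul_pow]
    ring
  have hfour : (2 : ℚ) ≤ 4 ^ d :=
    le_self_pow₀ (by norm_num) (by omega) |>.trans' (by norm_num)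
  calc |(k.choose d : ℚ) * ddf (2 * d - 1) * (a - b)|
      = (k.choose d : ℚ) * ddf (2 * d - 1) * |a - b| := by
        rw [abs_mul, abs_mul, abs_of_nonneg (Nat.cast_nonneg _), abs_of_pos (ddf_pos _)]
    _ ≤ (M : ℚ) ^ d * (2 * (M : ℚ)) ^ d * (2 * E) :=
        mul_le_mul (mul_le_mul hchoose (ddf_two_mul_sub_one_le (by omega)) (ddf_pos _).le
          (by positivity)) hsub (abs_nonneg _) (by positivity)
    _ = 2 * (1 / 8) ^ d * (16 ^ d * ((M : ℚ) ^ d) ^ 2 * E) := by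
        rw [mul_pow, show (2 : ℚ) ^ d = (1 / 8) ^ d * 16 ^ d by rw [← mul_pow]; norm_num]
        ring
    _ ≤ (1 / 2) ^ d * (4 * (M : ℚ)) ^ M := by
        rw [hsplit, show (1 / 2 : ℚ) ^ d = 4 ^ d * (1 / 8) ^ d by rw [← mul_pow]; norm_num]
        gcongr

lemma abs_N_add_two_le {n k : ℕ} (hkn : k + 2 < n)
    (ih : ∀ m < k + 2, ∀ n', m < n' → |N n' m| ≤ (4 * ((n' : ℚ) + m)) ^ (n' + m)) :
    |N n (k + 2)| ≤ (4 * ((n : ℚ) + (k + 2 : ℕ))) ^ (n + (k + 2)) := by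
  set M := n + (k + 2)
  have hMQ : (M : ℚ) = n + k + 2 := by simp only [M]; push_cast; ring
  rw [show (n : ℚ) + (k + 2 : ℕ) = M by rw [hMQ]; push_cast; ring]
  have hbound : ∀ m < k + 2, ∀ n', m < n' → ∀ e, n' + m ≤ e → e ≤ M →
      |N n' m| ≤ (4 * (M : ℚ)) ^ e := fun m hm n' hn' e he heM =>
    (ih m hm n' hn').trans <| by
      exact_mod_cast pow_le_pow (by omega : 4 * (n' + m) ≤ 4 * M) (by omega) he
  have hfirst : |((n : ℚ) + (k + 2) - 3) * N n (k + 1)| ≤ M * (4 * (M : ℚ)) ^ (M - 1) := by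
    rw [abs_mul]
    exact mul_le_mul (abs_le.mpr ⟨by linarith, by linarith⟩)
      (hbound _ (by omega) n (by omega) _ (by omega) (by omega)) (abs_nonneg _) (by positivity)
  have hsecond : |((k : ℚ) + 1) * N n k| ≤ M * (4 * (M : ℚ)) ^ (M - 1) := by
    rw [abs_mul]
    exact mul_le_mul (abs_le.mpr ⟨by linarith, by linarith⟩)
      (hbound _ (by omega) n (by omega) _ (by omega) (by omega)) (abs_nonneg _) (by positivity)
  have hsum : |∑ d ∈ Finset.Icc 1 (k + 1), ((k + 1).choose d : ℚ) * ddf (2 * d - 1) *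
      (N (n - d) (k + 1 - d) - N (n - d + 1) (k + 1 - d))| ≤ (4 * (M : ℚ)) ^ M := by
    refine (Finset.abs_sum_le_sum_abs _ _).trans <| (Finset.sum_le_sum fun d hd => ?_).trans <|
      (Finset.sum_mul _ _ _).symm.le.trans <|
        mul_le_of_le_one_left (by positivity) (sum_Icc_one_half_pow_le_one _)
    obtain ⟨hd1, hdk⟩ := Finset.mem_Icc.mp hd
    exact abs_choose_mul_ddf_mul_sub_le hd1 (by omega) (by omega)
      (hbound _ (by omega) _ (by omega) _ (by omega) (by omega))
      (hbound _ (by omega) _ (by omega) _ (by omega) (by omega))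
  have hpow : (4 * (M : ℚ)) ^ M = 4 * M * (4 * (M : ℚ)) ^ (M - 1) := by
    rw [← pow_succ', Nat.sub_add_cancel (by omega)]
  rw [N]
  refine (abs_add_three _ _ _).trans ?_
  rw [abs_mul (1 / 2), abs_of_pos (by norm_num : (0 : ℚ) < 1 / 2)]
  nlinarith [hfirst, hsecond, hsum, hpow]

theorem abs_N_le (k : ℕ) : ∀ n, k < n → |N n k| ≤ (4 * ((n : ℚ) + k)) ^ (n + k) := by
  induction k using Nat.strong_induction_on with
  | _ k ih =>
  match k with
  | 0 =>
    intro n hn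
    rw [N, abs_of_pos (ddf_pos _)]
    simpa using ddf_two_mul_sub_five_le hn
  | 1 =>
    intro n hn
    have hn2 : (2 : ℚ) ≤ n := by exact_mod_cast hn
    rw [N, abs_mul, abs_of_pos (ddf_pos _), pow_succ']
    push_cast
    exact mul_le_mul (abs_le.mpr ⟨by linarith, by linarith⟩)
      ((ddf_two_mul_sub_five_le (by omega)).trans
        (pow_le_pow_left₀ (by positivity) (by linarith) n))
      (ddf_pos _).le (by positivity)
  | k + 2 => exact fun n hn => abs_N_add_two_le hn ih

lemma N_le_pow {n k b e : ℕ} (hkn : k < n) (hb : 4 * (n + k) ≤ b) (he : n + k ≤ e) :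
    N n k ≤ (b : ℚ) ^ e :=
  (le_abs_self _).trans <| (abs_N_le k n hkn).trans <| by
    exact_mod_cast pow_le_pow hb (by omega) he

lemma two_pow_mul_twelve_pow_mul_le {n a b : ℕ} (hn : 1 ≤ n) (ha : a ≤ n) (hb : b ≤ 2 * n) :
    2 ^ a * 12 ^ (b + 1) * n ≤ 6912 ^ n :=
  calc 2 ^ a * 12 ^ (b + 1) * n ≤ 2 ^ n * 12 ^ (3 * n) * 2 ^ n := by
        gcongr
        · norm_num
        · norm_num
        · omega
        · exact Nat.lt_two_pow_self.le
    _ = 6912 ^ n := by rw [pow_mul, ← mul_pow, ← mul_pow]; norm_num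

/-- There are `c > 0` and `n₀` such that for all `n ≥ n₀` and `0 ≤ j ≤ ⌊n/2⌋`,
`∑_{ℓ=0}^{n-2j} C(n-2j,ℓ) N(n-j+1, ℓ+j) ≤ cⁿ n^{2n-2j}`. -/
theorem inner_sum_upper_bound :
    ∃ c : ℝ, 0 < c ∧ ∃ n₀ : ℕ, ∀ n : ℕ, n₀ ≤ n → ∀ j : ℕ, j ≤ n / 2 →
      (∑ ℓ ∈ Finset.range (n - 2 * j + 1),
          ((n - 2 * j).choose ℓ : ℝ) * ((N (n - j + 1) (ℓ + j) : ℚ) : ℝ))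
        ≤ c ^ n * (n : ℝ) ^ (2 * n - 2 * j) := by
  refine ⟨6912, by norm_num, 1, fun n hn j hj => ?_⟩
  have hterm : ∀ ℓ ∈ Finset.range (n - 2 * j + 1), ((N (n - j + 1) (ℓ + j) : ℚ) : ℝ) ≤
      ((12 * n : ℕ) : ℝ) ^ (2 * n - 2 * j + 1) := fun ℓ hℓ => by
    have hℓ' := Finset.mem_range.mp hℓ
    exact_mod_cast N_le_pow (by omega) (by omega) (by omega)
  calc _ ≤ ∑ ℓ ∈ Finset.range (n - 2 * j + 1),
          ((n - 2 * j).choose ℓ : ℝ) * ((12 * n : ℕ) : ℝ) ^ (2 * n - 2 * j + 1) :=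
        Finset.sum_le_sum fun ℓ hℓ => mul_le_mul_of_nonneg_left (hterm ℓ hℓ) (by positivity)
    _ = ((2 ^ (n - 2 * j) * 12 ^ (2 * n - 2 * j + 1) * n : ℕ) : ℝ) *
          (n : ℝ) ^ (2 * n - 2 * j) := by
        rw [← Finset.sum_mul, ← Nat.cast_sum, Nat.sum_range_choose]
        push_cast
        ring
    _ ≤ 6912 ^ n * (n : ℝ) ^ (2 * n - 2 * j) := by
        gcongr
        exact_mod_cast two_pow_mul_twelve_pow_mul_le hn (by omega) (by omega)
end
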